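/- For H_μ = (1/(1−λr²))·[ (px²+py²+pz²)/2 + k1 r² + k2 x + k3 y + k4 z ], the cross function K_xy = px·py + (2k1 x y + k3 x + k2 y) + 2λ x y H_μ satisfies {K_xy, H_μ} = 0. -/

import Mathlib

/-!
Write `H_μ = N / D` with `N` the Hamiltonian at `λ = 0` and `D = 1 - λ r²`, and
`K_xy = K₀ + 2λxy · H_μ` with `K₀ = px py + 2k1 xy + k3 x + k2 y`. The flat integral `K₀` commutes
with `N`, while `{K₀, D} = {2λxy, N} = 2λ(x py + y px)` and `{xy, D} = 0`. The Leibniz and quotient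
rules then give `{K_xy, H_μ} = H_μ ({2λxy, N} - {K₀, D}) / D = 0`.
-/

noncomputable section

/-- Phase space ℝ⁶ with coordinates (x,y,z,px,py,pz). -/
abbrev Pt := Fin 6 → ℝ

/-- Standard basis vector. -/
def e (j : Fin 6) : Pt := Pi.single j 1

/-- Canonical Poisson bracket on ℝ⁶:
{F,G} = Σᵢ (∂F/∂qᵢ ∂G/∂pᵢ − ∂F/∂pᵢ ∂G/∂qᵢ). -/
def pb (F G : Pt → ℝ) (q : Pt) : ℝ :=
    (fderiv ℝ F q (e 0)) * (fderiv ℝ G q (e 3)) - (fderiv ℝ F q (e 3)) * (fderiv ℝ G q (e 0))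
  + (fderiv ℝ F q (e 1)) * (fderiv ℝ G q (e 4)) - (fderiv ℝ F q (e 4)) * (fderiv ℝ G q (e 1))
  + (fderiv ℝ F q (e 2)) * (fderiv ℝ G q (e 5)) - (fderiv ℝ F q (e 5)) * (fderiv ℝ G q (e 2))

/-- H_μ = (1/(1−λr²))·[(px²+py²+pz²)/2 + k1 r² + k2 x + k3 y + k4 z]. -/
def Hmu (lam k1 k2 k3 k4 : ℝ) (q : Pt) : ℝ :=
  (1 / (1 - lam * (q 0 ^ 2 + q 1 ^ 2 + q 2 ^ 2))) *
    ((q 3 ^ 2 + q 4 ^ 2 + q 5 ^ 2) / 2 + k1 * (q 0 ^ 2 + q 1 ^ 2 + q 2 ^ 2)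
      + k2 * q 0 + k3 * q 1 + k4 * q 2)

/-- K_xy = px py + (2k1 x y + k3 x + k2 y) + 2λ x y H_μ. -/
def Kxy (lam k1 k2 k3 k4 : ℝ) (q : Pt) : ℝ :=
  q 3 * q 4 + (2 * k1 * q 0 * q 1 + k3 * q 0 + k2 * q 1)
    + 2 * lam * q 0 * q 1 * Hmu lam k1 k2 k3 k4 q

section PoissonBracket

variable {F G H N D : Pt → ℝ} {q : Pt}

theorem pb_self (F : Pt → ℝ) (q : Pt) : pb F F q = 0 := by
  unfold pb
  ring

theorem pb_add_left (hF : DifferentiableAt ℝ F q) (hG : DifferentiableAt ℝ G q) :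
    pb (fun y => F y + G y) H q = pb F H q + pb G H q := by
  simp only [pb, fderiv_fun_add hF hG, add_apply]
  ring

theorem pb_mul_left (hF : DifferentiableAt ℝ F q) (hG : DifferentiableAt ℝ G q) :
    pb (fun y => F y * G y) H q = F q * pb G H q + G q * pb F H q := by
  simp only [pb, fderiv_fun_mul hF hG, add_apply, smul_apply, smul_eq_mul]
  ring

theorem pb_div_right (hN : DifferentiableAt ℝ N q) (hD : DifferentiableAt ℝ D q) (hq : D q ≠ 0) :
    pb F (fun y => N y / D y) q = (pb F N q - N q / D q * pb F D q) / D q := by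
  have hquot := hN.hasFDerivAt.fun_mul ((hasDerivAt_inv hq).comp_hasFDerivAt q hD.hasFDerivAt)
  simp only [← div_eq_mul_inv, Function.comp_def] at hquot
  simp only [pb, hquot.fderiv, add_apply, smul_apply, smul_eq_mul]
  field_simp
  ring

end PoissonBracket

section CrossIntegral

variable (lam k1 k2 k3 k4 : ℝ)

def conformalFactor (q : Pt) : ℝ := 1 - lam * (q 0 ^ 2 + q 1 ^ 2 + q 2 ^ 2)

def flatHamiltonian (q : Pt) : ℝ :=
  (q 3 ^ 2 + q 4 ^ 2 + q 5 ^ 2) / 2 + k1 * (q 0 ^ 2 + q 1 ^ 2 + q 2 ^ 2)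
    + k2 * q 0 + k3 * q 1 + k4 * q 2

def flatKxy (q : Pt) : ℝ := q 3 * q 4 + (2 * k1 * q 0 * q 1 + k3 * q 0 + k2 * q 1)

theorem Hmu_eq_div :
    Hmu lam k1 k2 k3 k4 = fun q => flatHamiltonian k1 k2 k3 k4 q / conformalFactor lam q :=
  funext fun _ => one_div_mul_eq_div _ _

theorem Kxy_eq :
    Kxy lam k1 k2 k3 k4 = fun q => flatKxy k1 k2 k3 q + 2 * lam * q 0 * q 1 * Hmu lam k1 k2 k3 k4 q :=
  rfl

theorem pb_flatKxy_flatHamiltonian (q : Pt) :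
    pb (flatKxy k1 k2 k3) (flatHamiltonian k1 k2 k3 k4) q = 0 := by
  unfold flatKxy flatHamiltonian
  simp (disch := fun_prop) [pb, fderiv_fun_add, fderiv_fun_mul, fderiv_fun_pow, fderiv_apply,
    div_eq_mul_inv]
  simp [e]
  ring

theorem pb_flatKxy_conformalFactor (q : Pt) :
    pb (flatKxy k1 k2 k3) (conformalFactor lam) q = 2 * lam * (q 0 * q 4 + q 1 * q 3) := by
  unfold flatKxy conformalFactor
  simp (disch := fun_prop) [pb, fderiv_fun_add, fderiv_const_sub, fderiv_fun_mul, fderiv_fun_pow,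
    fderiv_apply]
  simp [e]
  ring

theorem pb_xy_flatHamiltonian (q : Pt) :
    pb (fun y => 2 * lam * y 0 * y 1) (flatHamiltonian k1 k2 k3 k4) q
      = 2 * lam * (q 0 * q 4 + q 1 * q 3) := by
  unfold flatHamiltonian
  simp (disch := fun_prop) [pb, fderiv_fun_add, fderiv_fun_mul, fderiv_fun_pow, fderiv_apply,
    div_eq_mul_inv]
  simp [e]
  ring

theorem pb_xy_conformalFactor (q : Pt) :
    pb (fun y => 2 * lam * y 0 * y 1) (conformalFactor lam) q = 0 := by
  unfold conformalFactor
  simp (disch := fun_prop) [pb, fderiv_fun_add, fderiv_const_sub, fderiv_fun_mul, fderiv_fun_pow,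
    fderiv_apply]
  simp [e]

theorem pb_Hmu_right {F : Pt → ℝ} {q : Pt} (hq : conformalFactor lam q ≠ 0) :
    pb F (Hmu lam k1 k2 k3 k4) q = (pb F (flatHamiltonian k1 k2 k3 k4) q
      - Hmu lam k1 k2 k3 k4 q * pb F (conformalFactor lam) q) / conformalFactor lam q := by
  rw [Hmu_eq_div]
  exact pb_div_right (by unfold flatHamiltonian; fun_prop) (by unfold conformalFactor; fun_prop) hq

end CrossIntegral

theorem stmt3 (lam k1 k2 k3 k4 : ℝ) :
    ∀ q : Pt, 1 - lam * (q 0 ^ 2 + q 1 ^ 2 + q 2 ^ 2) > 0 →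
      pb (Kxy lam k1 k2 k3 k4) (Hmu lam k1 k2 k3 k4) q = 0 := by
  intro q hq
  have hD : conformalFactor lam q ≠ 0 := hq.ne'
  have hK₀ : DifferentiableAt ℝ (flatKxy k1 k2 k3) q := by unfold flatKxy; fun_prop
  have hxy : DifferentiableAt ℝ (fun y : Pt => 2 * lam * y 0 * y 1) q := by fun_prop
  have hH : DifferentiableAt ℝ (Hmu lam k1 k2 k3 k4) q := by
    rw [Hmu_eq_div]
    unfold flatHamiltonian conformalFactor
    fun_prop (disch := exact hD)
  rw [Kxy_eq, pb_add_left hK₀ (hxy.fun_mul hH), pb_mul_left hxy hH, pb_self,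
    pb_Hmu_right lam k1 k2 k3 k4 hD, pb_Hmu_right lam k1 k2 k3 k4 hD,
    pb_flatKxy_flatHamiltonian, pb_flatKxy_conformalFactor, pb_xy_flatHamiltonian,
    pb_xy_conformalFactor]
  ring
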